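/- arXiv:2602.04117 — 2 statements merged into one kernel-verified Lean document; each statement's English description precedes it below -/
import Mathlib

section
/- In y_ℏ(gl(n)), the element ℋ_{n−1} commutes with the element A = T^{(2)}_{n,n} − ((n−1)/2)ℏ·T^{(1)}_{n,n} + ℏ∑_{u=1}^{n−1} T^{(1)}_{n,u}T^{(1)}_{u,n} + (ℏ/2)(T^{(1)}_{n,n})², that is, [ℋ_{n−1}, A] = 0. -/
open scoped BigOperators

noncomputable section

/-- Kronecker delta as a complex scalar. -/
def kd {n : ℕ} (i j : Fin n) : ℂ := if i = j then 1 else 0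

/-- The free associative unital `ℂ`-algebra on generators `T^{(r)}_{i,j}`,
`r ∈ ℕ`, `1 ≤ i, j ≤ n` (indices realized as `Fin n`). -/
abbrev FAgl (n : ℕ) := FreeAlgebra ℂ (ℕ × Fin n × Fin n)

/-- The generator `T^{(r)}_{i,j}` of the free algebra. -/
def Tf (n : ℕ) (r : ℕ) (i j : Fin n) : FAgl n := FreeAlgebra.ι ℂ (r, i, j)

/-- The defining relations of `y_ℏ(gl(n))`:  `T^{(0)}_{i,j} = δ_{i,j}`;
`[T^{(1)}_{i,j}, T^{(r)}_{k,l}] = δ_{j,k}T^{(r)}_{i,l} − δ_{i,l}T^{(r)}_{k,j}`;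
`[T^{(2)}_{i,i}, T^{(2)}_{j,j}] = −ℏ(T^{(1)}_{j,i}T^{(2)}_{i,j} − T^{(2)}_{j,i}T^{(1)}_{i,j})`;
`[T^{(2)}_{i,i}, T^{(r)}_{k,l}] = δ_{i,k}T^{(r+1)}_{i,l} − δ_{i,l}T^{(r+1)}_{k,i}
  − ℏ(T^{(1)}_{k,i}T^{(r)}_{i,l} − T^{(r)}_{k,i}T^{(1)}_{i,l})`. -/
inductive glRel (n : ℕ) (ℏ : ℂ) : FAgl n → FAgl n → Prop
  | T0 (i j : Fin n) :
      glRel n ℏ (Tf n 0 i j) (algebraMap ℂ (FAgl n) (kd i j))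
  | R1 (r : ℕ) (i j k l : Fin n) :
      glRel n ℏ ⁅Tf n 1 i j, Tf n r k l⁆
        (kd j k • Tf n r i l - kd i l • Tf n r k j)
  | R2 (i j : Fin n) :
      glRel n ℏ ⁅Tf n 2 i i, Tf n 2 j j⁆
        (-(ℏ • (Tf n 1 j i * Tf n 2 i j - Tf n 2 j i * Tf n 1 i j)))
  | R3 (r : ℕ) (i k l : Fin n) :
      glRel n ℏ ⁅Tf n 2 i i, Tf n r k l⁆
        (kd i k • Tf n (r + 1) i l - kd i l • Tf n (r + 1) k i
          - ℏ • (Tf n 1 k i * Tf n r i l - Tf n r k i * Tf n 1 i l))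

/-- The algebra `y_ℏ(gl(n))`: the quotient of the free algebra by the two-sided ideal
generated by the differences of the two sides of the relations `glRel`. -/
abbrev yGL (n : ℕ) (ℏ : ℂ) := RingQuot (glRel n ℏ)

/-- The image of `T^{(r)}_{i,j}` in `y_ℏ(gl(n))`. -/
def T (n : ℕ) (ℏ : ℂ) (r : ℕ) (i j : Fin n) : yGL n ℏ :=
  RingQuot.mkAlgHom ℂ (glRel n ℏ) (Tf n r i j)

/-- The element `ℋ_i` of `y_ℏ(gl(n))` for `1 ≤ i ≤ n−1`; here the paper's index `i`
corresponds to the 0-based index `a = i − 1` (so `a + 1 < n`), and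
`ℋ_i = T^{(2)}_{i,i} − T^{(2)}_{i+1,i+1} − ((i−1)/2)ℏ(T^{(1)}_{i,i} − T^{(1)}_{i+1,i+1})
 + ℏ∑_{u=1}^{i−1} T^{(1)}_{i,u}T^{(1)}_{u,i} − ℏ∑_{u=1}^{i} T^{(1)}_{i+1,u}T^{(1)}_{u,i+1}
 + (ℏ/2)((T^{(1)}_{i,i})² − (T^{(1)}_{i+1,i+1})²)`. -/
def HH (n : ℕ) (ℏ : ℂ) (a : ℕ) (h : a + 1 < n) : yGL n ℏ :=
  T n ℏ 2 ⟨a, by omega⟩ ⟨a, by omega⟩ - T n ℏ 2 ⟨a + 1, h⟩ ⟨a + 1, h⟩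
    - (((a : ℂ) / 2) * ℏ) • (T n ℏ 1 ⟨a, by omega⟩ ⟨a, by omega⟩ - T n ℏ 1 ⟨a + 1, h⟩ ⟨a + 1, h⟩)
    + ℏ • (∑ u : Fin a,
        T n ℏ 1 ⟨a, by omega⟩ ⟨u.val, by have := u.isLt; omega⟩ *
          T n ℏ 1 ⟨u.val, by have := u.isLt; omega⟩ ⟨a, by omega⟩)
    - ℏ • (∑ u : Fin (a + 1),
        T n ℏ 1 ⟨a + 1, h⟩ ⟨u.val, by have := u.isLt; omega⟩ *
          T n ℏ 1 ⟨u.val, by have := u.isLt; omega⟩ ⟨a + 1, h⟩)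
    + (ℏ / 2) • ((T n ℏ 1 ⟨a, by omega⟩ ⟨a, by omega⟩) ^ 2
        - (T n ℏ 1 ⟨a + 1, h⟩ ⟨a + 1, h⟩) ^ 2)


/-- The element `A = T^{(2)}_{n,n} − ((n−1)/2)ℏ·T^{(1)}_{n,n}
 + ℏ∑_{u=1}^{n−1} T^{(1)}_{n,u}T^{(1)}_{u,n} + (ℏ/2)(T^{(1)}_{n,n})²` of `y_ℏ(gl(n))`. -/
def Agl (n : ℕ) (ℏ : ℂ) (hn : 3 ≤ n) : yGL n ℏ :=
  T n ℏ 2 ⟨n - 1, by omega⟩ ⟨n - 1, by omega⟩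
    - ((((n : ℂ) - 1) / 2) * ℏ) • T n ℏ 1 ⟨n - 1, by omega⟩ ⟨n - 1, by omega⟩
    + ℏ • (∑ u : Fin (n - 1),
        T n ℏ 1 ⟨n - 1, by omega⟩ ⟨u.val, by have := u.isLt; omega⟩ *
          T n ℏ 1 ⟨u.val, by have := u.isLt; omega⟩ ⟨n - 1, by omega⟩)
    + (ℏ / 2) • (T n ℏ 1 ⟨n - 1, by omega⟩ ⟨n - 1, by omega⟩) ^ 2

section Aux

variable {n : ℕ} {ℏ : ℂ}

lemma kd_mk {a b : ℕ} (ha : a < n) (hb : b < n) :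
    kd (⟨a, ha⟩ : Fin n) ⟨b, hb⟩ = if a = b then 1 else 0 := by
  simp [kd, Fin.mk.injEq]

lemma rel1 (r : ℕ) (i j k l : Fin n) :
    ⁅T n ℏ 1 i j, T n ℏ r k l⁆ = kd j k • T n ℏ r i l - kd i l • T n ℏ r k j := by
  have h := RingQuot.mkAlgHom_rel ℂ (glRel.R1 (n := n) (ℏ := ℏ) r i j k l)
  simpa [T, Ring.lie_def, map_sub, map_mul, map_smul] using h

lemma rel2 (i j : Fin n) :
    ⁅T n ℏ 2 i i, T n ℏ 2 j j⁆
      = -(ℏ • (T n ℏ 1 j i * T n ℏ 2 i j - T n ℏ 2 j i * T n ℏ 1 i j)) := by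
  have h := RingQuot.mkAlgHom_rel ℂ (glRel.R2 (n := n) (ℏ := ℏ) i j)
  simpa [T, Ring.lie_def, map_sub, map_mul, map_smul] using h

lemma rel3 (r : ℕ) (i k l : Fin n) :
    ⁅T n ℏ 2 i i, T n ℏ r k l⁆
      = kd i k • T n ℏ (r + 1) i l - kd i l • T n ℏ (r + 1) k i
          - ℏ • (T n ℏ 1 k i * T n ℏ r i l - T n ℏ r k i * T n ℏ 1 i l) := by
  have h := RingQuot.mkAlgHom_rel ℂ (glRel.R3 (n := n) (ℏ := ℏ) r i k l)
  simpa [T, Ring.lie_def, map_sub, map_mul, map_smul] using h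

lemma lie_mul' (a b c : yGL n ℏ) : ⁅a, b * c⁆ = ⁅a, b⁆ * c + b * ⁅a, c⁆ := by
  simp only [Ring.lie_def, mul_sub, sub_mul, mul_assoc]; abel

lemma mul_lie' (a b c : yGL n ℏ) : ⁅a * b, c⁆ = a * ⁅b, c⁆ + ⁅a, c⁆ * b := by
  simp only [Ring.lie_def, mul_sub, sub_mul, mul_assoc]; abel

lemma lie_smul' (c : ℂ) (a b : yGL n ℏ) : ⁅a, c • b⁆ = c • ⁅a, b⁆ := by
  simp [Ring.lie_def, mul_smul_comm, smul_mul_assoc, smul_sub]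

lemma smul_lie' (c : ℂ) (a b : yGL n ℏ) : ⁅c • a, b⁆ = c • ⁅a, b⁆ := by
  simp [Ring.lie_def, mul_smul_comm, smul_mul_assoc, smul_sub]

lemma lie_sum' {ι : Type*} (s : Finset ι) (x : yGL n ℏ) (f : ι → yGL n ℏ) :
    ⁅x, ∑ i ∈ s, f i⁆ = ∑ i ∈ s, ⁅x, f i⁆ := by
  simp only [Ring.lie_def, Finset.mul_sum, Finset.sum_mul, ← Finset.sum_sub_distrib]

lemma sum_lie' {ι : Type*} (s : Finset ι) (x : yGL n ℏ) (f : ι → yGL n ℏ) :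
    ⁅∑ i ∈ s, f i, x⁆ = ∑ i ∈ s, ⁅f i, x⁆ := by
  simp only [Ring.lie_def, Finset.mul_sum, Finset.sum_mul, ← Finset.sum_sub_distrib]

end Aux

section Tprime

/-- `T` reindexed by natural numbers (vanishing out of range), to avoid
dependent `Fin.mk` proofs in computations. -/
def T' (n : ℕ) (ℏ : ℂ) (r a b : ℕ) : yGL n ℏ :=
  if h : a < n ∧ b < n then T n ℏ r ⟨a, h.1⟩ ⟨b, h.2⟩ else 0

variable {n : ℕ} {ℏ : ℂ}

lemma T'_eq {a b : ℕ} (r : ℕ) (ha : a < n) (hb : b < n) :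
    T' n ℏ r a b = T n ℏ r ⟨a, ha⟩ ⟨b, hb⟩ := dif_pos ⟨ha, hb⟩

lemma T_eq (r : ℕ) (i j : Fin n) : T n ℏ r i j = T' n ℏ r i.val j.val :=
  (T'_eq r i.isLt j.isLt).symm

lemma rel1' {a b c d : ℕ} (r : ℕ) (ha : a < n) (hb : b < n) (hc : c < n) (hd : d < n) :
    ⁅T' n ℏ 1 a b, T' n ℏ r c d⁆
      = (if b = c then (1:ℂ) else 0) • T' n ℏ r a d
          - (if a = d then (1:ℂ) else 0) • T' n ℏ r c b := by
  rw [T'_eq 1 ha hb, T'_eq r hc hd, T'_eq r ha hd, T'_eq r hc hb, rel1, kd_mk, kd_mk]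

lemma rel2' {a b : ℕ} (ha : a < n) (hb : b < n) :
    ⁅T' n ℏ 2 a a, T' n ℏ 2 b b⁆
      = -(ℏ • (T' n ℏ 1 b a * T' n ℏ 2 a b - T' n ℏ 2 b a * T' n ℏ 1 a b)) := by
  rw [T'_eq 2 ha ha, T'_eq 2 hb hb, T'_eq 1 hb ha, T'_eq 2 ha hb, T'_eq 2 hb ha,
    T'_eq 1 ha hb, rel2]

lemma rel3one {a c d : ℕ} (ha : a < n) (hc : c < n) (hd : d < n) :
    ⁅T' n ℏ 2 a a, T' n ℏ 1 c d⁆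
      = (if a = c then (1:ℂ) else 0) • T' n ℏ 2 a d
          - (if a = d then (1:ℂ) else 0) • T' n ℏ 2 c a := by
  rw [T'_eq 2 ha ha, T'_eq 1 hc hd, T'_eq 2 ha hd, T'_eq 2 hc ha]
  have h := rel3 (n := n) (ℏ := ℏ) 1 ⟨a, ha⟩ ⟨c, hc⟩ ⟨d, hd⟩
  rw [kd_mk, kd_mk] at h
  simpa using h

end Tprime
section Arsenal

variable {n : ℕ} {ℏ : ℂ}

lemma y1 (a : yGL n ℏ) : (1:ℂ) • a = a := one_smul ℂ a
lemma y0 (a : yGL n ℏ) : (0:ℂ) • a = 0 := zero_smul ℂ a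
lemma ysmul0 (c : ℂ) : c • (0 : yGL n ℏ) = 0 := smul_zero c
lemma ymul0 (a : yGL n ℏ) : a * 0 = 0 := mul_zero a
lemma y0mul (a : yGL n ℏ) : 0 * a = 0 := zero_mul a
lemma ysub0 (a : yGL n ℏ) : a - 0 = a := sub_zero a
lemma y0sub (a : yGL n ℏ) : 0 - a = -a := zero_sub a
lemma yadd0 (a : yGL n ℏ) : a + 0 = a := add_zero a
lemma y0add (a : yGL n ℏ) : 0 + a = a := zero_add a
lemma ynegmul (a b : yGL n ℏ) : -a * b = -(a * b) := neg_mul a b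
lemma ymulneg (a b : yGL n ℏ) : a * -b = -(a * b) := mul_neg a b
lemma ysubmul (a b c : yGL n ℏ) : (a - b) * c = a * c - b * c := sub_mul a b c
lemma ymulsub (a b c : yGL n ℏ) : a * (b - c) = a * b - a * c := mul_sub a b c
lemma yaddmul (a b c : yGL n ℏ) : (a + b) * c = a * c + b * c := add_mul a b c
lemma ymuladd (a b c : yGL n ℏ) : a * (b + c) = a * b + a * c := mul_add a b c
lemma ysmulmul (c : ℂ) (a b : yGL n ℏ) : (c • a) * b = c • (a * b) := smul_mul_assoc c a b
lemma ymulsmul (c : ℂ) (a b : yGL n ℏ) : a * (c • b) = c • (a * b) := mul_smul_comm c a b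
lemma ymulassoc (a b c : yGL n ℏ) : a * b * c = a * (b * c) := mul_assoc a b c
lemma ypow2 (a : yGL n ℏ) : a ^ 2 = a * a := sq a
lemma ylie_add (a b c : yGL n ℏ) : ⁅a, b + c⁆ = ⁅a, b⁆ + ⁅a, c⁆ := by simp only [Ring.lie_def, mul_add, add_mul]; abel
lemma yadd_lie (a b c : yGL n ℏ) : ⁅a + b, c⁆ = ⁅a, c⁆ + ⁅b, c⁆ := by simp only [Ring.lie_def, mul_add, add_mul]; abel
lemma ylie_sub (a b c : yGL n ℏ) : ⁅a, b - c⁆ = ⁅a, b⁆ - ⁅a, c⁆ := by simp only [Ring.lie_def, mul_sub, sub_mul]; abel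
lemma ysub_lie (a b c : yGL n ℏ) : ⁅a - b, c⁆ = ⁅a, c⁆ - ⁅b, c⁆ := by simp only [Ring.lie_def, mul_sub, sub_mul]; abel

end Arsenal
section Bel

variable {n : ℕ} {ℏ : ℂ}

/-- The quadratic sum `∑_{u<m} T¹_{m,u} T¹_{u,m}`. -/
def SQ' (n : ℕ) (ℏ : ℂ) (m : ℕ) : yGL n ℏ :=
  ∑ u : Fin m, T' n ℏ 1 m u.val * T' n ℏ 1 u.val m

/-- The Bethe-type element `B_m`. -/
def Bel' (n : ℕ) (ℏ : ℂ) (m : ℕ) : yGL n ℏ :=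
  T' n ℏ 2 m m - (((m : ℂ) / 2) * ℏ) • T' n ℏ 1 m m
    + ℏ • SQ' n ℏ m + (ℏ / 2) • (T' n ℏ 1 m m) ^ 2

lemma lie_t_t (m q : ℕ) (hm : m < n) (hq : q < n) :
    ⁅T' n ℏ 1 m m, T' n ℏ 1 q q⁆ = 0 := by
  rw [rel1' 1 hm hm hq hq]
  by_cases h : m = q
  · subst h
    rw [if_pos rfl]
    simp only [y1, sub_self]
  · rw [if_neg h]
    simp only [y0, sub_self]

lemma lie_t_X (m q : ℕ) (hm : m < n) (hq : q < n) :
    ⁅T' n ℏ 1 m m, T' n ℏ 2 q q⁆ = 0 := by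
  rw [rel1' 2 hm hm hq hq]
  by_cases h : m = q
  · subst h
    rw [if_pos rfl]
    simp only [y1, sub_self]
  · rw [if_neg h]
    simp only [y0, sub_self]

lemma lie_X_t (m q : ℕ) (hm : m < n) (hq : q < n) :
    ⁅T' n ℏ 2 m m, T' n ℏ 1 q q⁆ = 0 := by
  rw [rel3one hm hq hq]
  by_cases h : m = q
  · subst h
    rw [if_pos rfl]
    simp only [y1, sub_self]
  · rw [if_neg h]
    simp only [y0, sub_self]

lemma lie_t_SQ {m q : ℕ} (hm : m < n) (hq : q < n) (hmq : m ≤ q) :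
    ⁅T' n ℏ 1 m m, SQ' n ℏ q⁆ = 0 := by
  rw [SQ', lie_sum']
  apply Finset.sum_eq_zero
  intro v _
  have hv : v.val < q := v.isLt
  rw [lie_mul', rel1' 1 hm hm hq (by omega), rel1' 1 hm hm (by omega) hq]
  by_cases h1 : m = q
  · subst h1
    rw [if_pos rfl, if_neg (show ¬ m = v.val by omega)]
    simp only [y1, y0, ysub0, y0sub, ymulneg, ynegmul, ysubmul, ymulsub,
      y0mul, ymul0, ymulassoc]
    abel
  · by_cases h2 : m = v.val
    · rw [if_neg h1, if_pos h2]
      simp only [y1, y0, ysub0, y0sub, ymulneg, ynegmul, ysubmul, ymulsub,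
        y0mul, ymul0, ymulassoc, h2]
      abel
    · rw [if_neg h1, if_neg h2]
      simp only [y0, sub_self, y0mul, ymul0, add_zero]

lemma SQ_lie_t {p q : ℕ} (hq : q < n) (hpq : p < q) :
    ⁅SQ' n ℏ p, T' n ℏ 1 q q⁆ = 0 := by
  rw [SQ', sum_lie']
  apply Finset.sum_eq_zero
  intro u _
  have hu : u.val < p := u.isLt
  rw [mul_lie', rel1' 1 (by omega) (by omega) hq hq, rel1' 1 (by omega) (by omega) hq hq]
  rw [if_neg (show ¬ p = q by omega), if_neg (show ¬ u.val = q by omega)]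
  simp only [y0, sub_self, y0mul, ymul0, add_zero]

lemma SQ_lie_X {p q : ℕ} (hq : q < n) (hpq : p < q) :
    ⁅SQ' n ℏ p, T' n ℏ 2 q q⁆ = 0 := by
  rw [SQ', sum_lie']
  apply Finset.sum_eq_zero
  intro u _
  have hu : u.val < p := u.isLt
  rw [mul_lie', rel1' 2 (by omega) (by omega) hq hq, rel1' 2 (by omega) (by omega) hq hq]
  rw [if_neg (show ¬ p = q by omega), if_neg (show ¬ u.val = q by omega)]
  simp only [y0, sub_self, y0mul, ymul0, add_zero]

lemma lie_X_SQ {p q : ℕ} (hq : q < n) (hpq : p < q) :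
    ⁅T' n ℏ 2 p p, SQ' n ℏ q⁆
      = T' n ℏ 1 q p * T' n ℏ 2 p q - T' n ℏ 2 q p * T' n ℏ 1 p q := by
  have hp : p < n := by omega
  rw [SQ', lie_sum']
  have key : ∀ v : Fin q, ⁅T' n ℏ 2 p p, T' n ℏ 1 q v.val * T' n ℏ 1 v.val q⁆
      = if v = (⟨p, hpq⟩ : Fin q) then
          (T' n ℏ 1 q p * T' n ℏ 2 p q - T' n ℏ 2 q p * T' n ℏ 1 p q) else 0 := by
    intro v
    have hv : v.val < q := v.isLt
    rw [lie_mul', rel3one hp hq (by omega), rel3one hp (by omega) hq]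
    rw [if_neg (show ¬ p = q by omega)]
    by_cases h2 : p = v.val
    · rw [if_pos h2, if_pos (show v = (⟨p, hpq⟩ : Fin q) from Fin.ext h2.symm)]
      simp only [y1, y0, ysub0, y0sub, ymulneg, ynegmul, ← h2]
      abel
    · rw [if_neg h2, if_neg (show ¬ v = (⟨p, hpq⟩ : Fin q) from
        fun h => h2 (by rw [h]))]
      simp only [y0, sub_self, y0mul, ymul0, add_zero]
  rw [Finset.sum_congr rfl (fun v _ => key v), Finset.sum_ite_eq']
  simp

end Bel
section Bel2

variable {n : ℕ} {ℏ : ℂ}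

lemma SQ_lie_SQ {p q : ℕ} (hq : q < n) (hpq : p < q) :
    ⁅SQ' n ℏ p, SQ' n ℏ q⁆ = 0 := by
  have hp : p < n := by omega
  unfold SQ'
  rw [sum_lie']
  apply Finset.sum_eq_zero
  intro u _
  have hu : u.val < p := u.isLt
  have hun : u.val < n := by omega
  rw [lie_sum']
  set G : yGL n ℏ := T' n ℏ 1 q u.val * (T' n ℏ 1 p q * T' n ℏ 1 u.val p)
      - T' n ℏ 1 p u.val * (T' n ℏ 1 q p * T' n ℏ 1 u.val q) with hG
  have key : ∀ v : Fin q, ⁅T' n ℏ 1 p u.val * T' n ℏ 1 u.val p,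
        T' n ℏ 1 q v.val * T' n ℏ 1 v.val q⁆
      = (if v = (⟨u.val, by omega⟩ : Fin q) then G else 0)
        + (if v = (⟨p, hpq⟩ : Fin q) then -G else 0) := by
    intro v
    have hv : v.val < q := v.isLt
    have hvn : v.val < n := by omega
    rw [mul_lie', lie_mul', lie_mul',
      rel1' 1 hun hp hq hvn, rel1' 1 hun hp hvn hq,
      rel1' 1 hp hun hq hvn, rel1' 1 hp hun hvn hq]
    rw [if_neg (show ¬ p = q by omega), if_neg (show ¬ u.val = q by omega)]
    by_cases h1 : u.val = v.val
    · rw [if_pos h1, if_neg (show ¬ p = v.val by omega),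
        if_pos (show v = (⟨u.val, by omega⟩ : Fin q) from Fin.ext h1.symm),
        if_neg (show ¬ v = (⟨p, hpq⟩ : Fin q) from fun h => by
          have hvv : v.val = p := by rw [h]
          omega)]
      simp only [hG, y1, y0, ysub0, y0sub, ymulneg, ynegmul, ysubmul, ymulsub,
        y0mul, ymul0, ymuladd, yaddmul, ymulassoc, yadd0, y0add, ← h1]
      abel
    · by_cases h2 : p = v.val
      · rw [if_neg h1, if_pos h2,
          if_neg (show ¬ v = (⟨u.val, by omega⟩ : Fin q) from fun h => by
            have hvv : v.val = u.val := by rw [h]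
            omega),
          if_pos (show v = (⟨p, hpq⟩ : Fin q) from Fin.ext h2.symm)]
        simp only [hG, y1, y0, ysub0, y0sub, ymulneg, ynegmul, ysubmul, ymulsub,
          y0mul, ymul0, ymuladd, yaddmul, ymulassoc, yadd0, y0add, neg_sub, ← h2]
        abel
      · rw [if_neg h1, if_neg h2,
          if_neg (show ¬ v = (⟨u.val, by omega⟩ : Fin q) from fun h => by
            have hvv : v.val = u.val := by rw [h]
            omega),
          if_neg (show ¬ v = (⟨p, hpq⟩ : Fin q) from fun h => by
            have hvv : v.val = p := by rw [h]
            omega)]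
        simp only [y0, sub_self, y0mul, ymul0, yadd0, y0add, add_zero]
  rw [Finset.sum_congr rfl (fun v _ => key v), Finset.sum_add_distrib,
    Finset.sum_ite_eq', Finset.sum_ite_eq']
  simp

lemma commBel' (p q : ℕ) (hq : q < n) (hpq : p < q) :
    ⁅Bel' n ℏ p, Bel' n ℏ q⁆ = 0 := by
  have hp : p < n := by omega
  have c1 : ⁅T' n ℏ 2 p p, T' n ℏ 2 q q⁆
      = -(ℏ • (T' n ℏ 1 q p * T' n ℏ 2 p q - T' n ℏ 2 q p * T' n ℏ 1 p q)) :=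
    rel2' hp hq
  have c2 : ⁅T' n ℏ 2 p p, T' n ℏ 1 q q⁆ = 0 := lie_X_t p q hp hq
  have c3 : ⁅T' n ℏ 2 p p, SQ' n ℏ q⁆
      = T' n ℏ 1 q p * T' n ℏ 2 p q - T' n ℏ 2 q p * T' n ℏ 1 p q := lie_X_SQ hq hpq
  have c4 : ⁅T' n ℏ 1 p p, T' n ℏ 2 q q⁆ = 0 := lie_t_X p q hp hq
  have c5 : ⁅T' n ℏ 1 p p, T' n ℏ 1 q q⁆ = 0 := lie_t_t p q hp hq
  have c6 : ⁅T' n ℏ 1 p p, SQ' n ℏ q⁆ = 0 := lie_t_SQ hp hq (by omega)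
  have c7 : ⁅SQ' n ℏ p, T' n ℏ 2 q q⁆ = 0 := SQ_lie_X hq hpq
  have c8 : ⁅SQ' n ℏ p, T' n ℏ 1 q q⁆ = 0 := SQ_lie_t hq hpq
  have c9 : ⁅SQ' n ℏ p, SQ' n ℏ q⁆ = 0 := SQ_lie_SQ hq hpq
  simp only [Bel', ypow2, ylie_add, yadd_lie, ylie_sub, ysub_lie, lie_smul', smul_lie',
    lie_mul', mul_lie', c1, c2, c3, c4, c5, c6, c7, c8, c9,
    ymul0, y0mul, ysmul0, smul_zero, add_zero, zero_add, sub_zero, zero_sub, smul_neg,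
    neg_zero]
  abel

lemma t_lie_Bel' (q : ℕ) (hq : q < n) :
    ⁅T' n ℏ 1 q q, Bel' n ℏ q⁆ = 0 := by
  have c2 : ⁅T' n ℏ 1 q q, T' n ℏ 2 q q⁆ = 0 := lie_t_X q q hq hq
  have c5 : ⁅T' n ℏ 1 q q, T' n ℏ 1 q q⁆ = 0 := lie_t_t q q hq hq
  have c6 : ⁅T' n ℏ 1 q q, SQ' n ℏ q⁆ = 0 := lie_t_SQ hq hq le_rfl
  simp only [Bel', ypow2, ylie_add, ylie_sub, lie_smul', lie_mul',
    c2, c5, c6, ymul0, y0mul, ysmul0, smul_zero, add_zero, zero_add, sub_zero,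
    zero_sub, neg_zero]

end Bel2
section Final

variable {n : ℕ} {ℏ : ℂ}

lemma ysmul_sub (c : ℂ) (a b : yGL n ℏ) : c • (a - b) = c • a - c • b := smul_sub c a b
lemma yadd_smul (c d : ℂ) (a : yGL n ℏ) : (c + d) • a = c • a + d • a := add_smul c d a

lemma Agl_eq (hn : 3 ≤ n) : Agl n ℏ hn = Bel' n ℏ (n - 1) := by
  unfold Agl Bel' SQ'
  simp only [T_eq]
  rw [Nat.cast_sub (by omega : 1 ≤ n), Nat.cast_one]

lemma HH_eq (a : ℕ) (h : a + 1 < n) :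
    HH n ℏ a h = Bel' n ℏ a - Bel' n ℏ (a + 1)
      - (ℏ / 2) • T' n ℏ 1 (a + 1) (a + 1) := by
  unfold HH Bel' SQ'
  simp only [T_eq]
  push_cast
  module

end Final
/-- in `y_ℏ(gl(n))`, `[ℋ_{n−1}, A] = 0`. -/
theorem HH_comm_Agl (n : ℕ) (hn : 3 ≤ n) (ℏ : ℂ) :
    ⁅HH n ℏ (n - 2) (by omega), Agl n ℏ hn⁆ = 0 := by
  rw [HH_eq, Agl_eq, show n - 2 + 1 = n - 1 from by omega]
  rw [ysub_lie, ysub_lie, smul_lie', commBel' (n - 2) (n - 1) (by omega) (by omega),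
    (by rw [Ring.lie_def, sub_self] : ⁅Bel' n ℏ (n - 1), Bel' n ℏ (n - 1)⁆ = 0), t_lie_Bel' (n - 1) (by omega)]
  simp

end
end

section
/- Let k ≥ 1, let a_1, …, a_k ∈ {1, …, n} be pairwise distinct, let b_1, …, b_k ∈ {1, …, n} be pairwise distinct, and let s ∈ ℂ. Then for all 1 ≤ i, j ≤ n, in y_ℏ(gl(n))[[w]] one has [T^{(1)}_{i,j}, t^{a_1,…,a_k}_{b_1,…,b_k}[s]] = ∑_{u=1}^{k} δ_{a_u, j} · t^{a_1,…,a_{u−1}, i, a_{u+1},…,a_k}_{b_1,…,b_k}[s] − ∑_{u=1}^{k} δ_{i, b_u} · t^{a_1,…,a_k}_{b_1,…,b_{u−1}, j, b_{u+1},…,b_k}[s]. -/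
open scoped BigOperators

noncomputable section

/-- The series `t_{i,j}[a] ∈ y_ℏ(gl(n))[[w]]`: the expansion in `w = u⁻¹` of
`t_{i,j}(u + a) = δ_{i,j} + ∑_{r≥1} T^{(r)}_{i,j} (u+a)^{−r}`, i.e.
`t_{i,j}[a] = δ_{i,j} + ∑_{r≥1} T^{(r)}_{i,j} wʳ (1 + a w)^{−r}`; explicitly its
coefficient of `w^m` (for `m ≥ 1`) is `∑_{r=1}^{m} (−a)^{m−r} C(m−1, m−r) T^{(r)}_{i,j}`. -/
def tser (n : ℕ) (ℏ : ℂ) (a : ℂ) (i j : Fin n) : PowerSeries (yGL n ℏ) :=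
  PowerSeries.mk fun m =>
    if m = 0 then kd i j • (1 : yGL n ℏ)
    else ∑ r ∈ Finset.Icc 1 m,
      (((-a) ^ (m - r)) * ((m - 1).choose (m - r) : ℂ)) • T n ℏ r i j

/-- The quantum minor `t^{a_1,…,a_l}_{b_1,…,b_l}[s] = ∑_{σ,τ ∈ S_l} sgn(σ) sgn(τ)
 t_{a_{σ(1)},b_{τ(1)}}[s] t_{a_{σ(2)},b_{τ(2)}}[s+ℏ] ⋯ t_{a_{σ(l)},b_{τ(l)}}[s+(l−1)ℏ]`
in `y_ℏ(gl(n))[[w]]`. -/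
def qminor (n : ℕ) (ℏ : ℂ) (l : ℕ) (a b : Fin l → Fin n) (s : ℂ) :
    PowerSeries (yGL n ℏ) :=
  ∑ σ : Equiv.Perm (Fin l), ∑ τ : Equiv.Perm (Fin l),
    ((Equiv.Perm.sign σ : ℤ) * (Equiv.Perm.sign τ : ℤ)) •
      (List.ofFn fun k : Fin l =>
        tser n ℏ (s + (k.val : ℂ) * ℏ) (a (σ k)) (b (τ k))).prod

section Aux

lemma kd_comm {m : ℕ} (i j : Fin m) : kd i j = kd j i := by
  simp [kd, eq_comm]

/-- Bracket with a sum, in a ring. -/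
lemma my_lie_sum {R : Type*} [Ring R] {ι : Type*} (s : Finset ι) (x : R) (f : ι → R) :
    ⁅x, ∑ u ∈ s, f u⁆ = ∑ u ∈ s, ⁅x, f u⁆ := by
  simp only [Ring.lie_def, Finset.mul_sum, Finset.sum_mul, Finset.sum_sub_distrib]

/-- The fundamental relation R1 in the quotient. -/
lemma T_bracket {n : ℕ} {ℏ : ℂ} (r : ℕ) (i j kk l : Fin n) :
    ⁅T n ℏ 1 i j, T n ℏ r kk l⁆ = kd j kk • T n ℏ r i l - kd i l • T n ℏ r kk j := by
  have h := RingQuot.mkAlgHom_rel ℂ (glRel.R1 (n := n) (ℏ := ℏ) r i j kk l)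
  simpa [T, Ring.lie_def, map_sub, map_mul, map_smul] using h

/-- Bracket of `C (T¹_{ij})` with the series `t_{kl}[c]`. -/
lemma C_T1_bracket_tser {n : ℕ} {ℏ : ℂ} (c : ℂ) (i j kk l : Fin n) :
    ⁅(PowerSeries.C (R := yGL n ℏ)) (T n ℏ 1 i j), tser n ℏ c kk l⁆
      = kd j kk • tser n ℏ c i l - kd i l • tser n ℏ c kk j := by
  apply PowerSeries.ext
  intro m
  rw [Ring.lie_def]
  simp only [map_sub, PowerSeries.coeff_C_mul, PowerSeries.coeff_mul_C,
    PowerSeries.coeff_smul, tser, PowerSeries.coeff_mk]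
  by_cases hm : m = 0
  · simp only [hm, eq_self_iff_true, if_true]
    rw [mul_smul_comm, smul_mul_assoc, mul_one, one_mul, sub_self,
      smul_smul, smul_smul, kd_comm kk j, mul_comm (kd j kk), sub_self]
  · simp only [if_neg hm]
    rw [Finset.mul_sum, Finset.sum_mul, ← Finset.sum_sub_distrib,
      Finset.smul_sum, Finset.smul_sum, ← Finset.sum_sub_distrib]
    refine Finset.sum_congr rfl fun r _ => ?_
    have h := T_bracket (n := n) (ℏ := ℏ) r i j kk l
    rw [Ring.lie_def] at h
    rw [mul_smul_comm, smul_mul_assoc, ← smul_sub _ (T n ℏ 1 i j * T n ℏ r kk l), h,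
      smul_sub, smul_comm _ (kd j kk), smul_comm _ (kd i l)]

/-- `Function.update` at a successor index, precomposed with `Fin.succ`. -/
lemma update_succ_comp {α : Type*} {m : ℕ} (f : Fin (m + 1) → α) (u : Fin m) (c : α) :
    (fun i : Fin m => (Function.update f u.succ c) i.succ)
      = Function.update (fun i : Fin m => f i.succ) u c := by
  funext x
  simp [Function.update_apply, Fin.succ_inj]

/-- Leibniz rule for the bracket against a product of a list of factors. -/
lemma lie_listProd {R : Type*} [Ring R] (x : R) :
    ∀ (m : ℕ) (f : Fin m → R),
      ⁅x, (List.ofFn f).prod⁆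
        = ∑ u : Fin m, (List.ofFn (Function.update f u ⁅x, f u⁆)).prod := by
  intro m
  induction m with
  | zero => intro f; simp [Ring.lie_def]
  | succ m ih =>
    intro f
    rw [List.ofFn_succ, List.prod_cons]
    have leib : ⁅x, f 0 * (List.ofFn fun i : Fin m => f i.succ).prod⁆
        = ⁅x, f 0⁆ * (List.ofFn fun i : Fin m => f i.succ).prod
          + f 0 * ⁅x, (List.ofFn fun i : Fin m => f i.succ).prod⁆ := by
      simp only [Ring.lie_def]; noncomm_ring
    rw [leib, ih, Finset.mul_sum, Fin.sum_univ_succ]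
    congr 1
    · rw [List.ofFn_succ, List.prod_cons, Function.update_self]
      have : (fun i : Fin m => (Function.update f 0 ⁅x, f 0⁆) i.succ)
          = fun i : Fin m => f i.succ := by
        funext i
        rw [Function.update_of_ne (Fin.succ_ne_zero i)]
      rw [this]
    · refine Finset.sum_congr rfl fun u _ => ?_
      rw [List.ofFn_succ, List.prod_cons,
        Function.update_of_ne (Fin.succ_ne_zero u).symm, update_succ_comp]

/-- Multilinearity (smul) of list products. -/
lemma listProd_update_smul {R : Type*} [Ring R] [Algebra ℂ R] {m : ℕ}
    (f : Fin m → R) (u : Fin m) (c : ℂ) (g : R) :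
    (List.ofFn (Function.update f u (c • g))).prod
      = c • (List.ofFn (Function.update f u g)).prod := by
  have h := MultilinearMap.map_update_smul (MultilinearMap.mkPiAlgebraFin ℂ m R) f u c g
  simpa only [MultilinearMap.mkPiAlgebraFin_apply] using h

/-- Multilinearity (sub) of list products. -/
lemma listProd_update_sub {R : Type*} [Ring R] [Algebra ℂ R] {m : ℕ}
    (f : Fin m → R) (u : Fin m) (g h : R) :
    (List.ofFn (Function.update f u (g - h))).prod
      = (List.ofFn (Function.update f u g)).prod
        - (List.ofFn (Function.update f u h)).prod := by
  have hh := MultilinearMap.map_update_sub (MultilinearMap.mkPiAlgebraFin ℂ m R) f u g h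
  simpa only [MultilinearMap.mkPiAlgebraFin_apply] using hh

end Aux

/-- for `k ≥ 1`, pairwise distinct `a_1,…,a_k`, pairwise distinct
`b_1,…,b_k`, and `s ∈ ℂ`, in `y_ℏ(gl(n))[[w]]` one has
`[T^{(1)}_{i,j}, t^{a_1,…,a_k}_{b_1,…,b_k}[s]]
  = ∑_{u=1}^{k} δ_{a_u,j} t^{a_1,…,i,…,a_k}_{b_1,…,b_k}[s]
    − ∑_{u=1}^{k} δ_{i,b_u} t^{a_1,…,a_k}_{b_1,…,j,…,b_k}[s]`. -/

theorem T1_comm_qminor (n : ℕ) (hn : 3 ≤ n) (ℏ : ℂ) (k : ℕ) (hk : 1 ≤ k)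
    (a b : Fin k → Fin n) (ha : Function.Injective a) (hb : Function.Injective b)
    (s : ℂ) (i j : Fin n) :
    ⁅(PowerSeries.C (R := yGL n ℏ)) (T n ℏ 1 i j), qminor n ℏ k a b s⁆
      = ∑ u : Fin k, kd (a u) j • qminor n ℏ k (Function.update a u i) b s
        - ∑ u : Fin k, kd i (b u) • qminor n ℏ k a (Function.update b u j) s := by
  classical
  set x : PowerSeries (yGL n ℏ) := (PowerSeries.C (R := yGL n ℏ)) (T n ℏ 1 i j) with hx
  -- the factors
  set F : Equiv.Perm (Fin k) → Equiv.Perm (Fin k) → Fin k → PowerSeries (yGL n ℏ) :=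
    fun σ τ u => tser n ℏ (s + (u.val : ℂ) * ℏ) (a (σ u)) (b (τ u)) with hF
  -- per-permutation computation
  have key : ∀ (σ τ : Equiv.Perm (Fin k)),
      ⁅x, (List.ofFn (F σ τ)).prod⁆
        = (∑ v : Fin k, kd (a v) j •
            (List.ofFn fun u : Fin k =>
              tser n ℏ (s + (u.val : ℂ) * ℏ) ((Function.update a v i) (σ u)) (b (τ u))).prod)
          - ∑ v : Fin k, kd i (b v) •
            (List.ofFn fun u : Fin k =>
              tser n ℏ (s + (u.val : ℂ) * ℏ) (a (σ u)) ((Function.update b v j) (τ u))).prod := by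
    intro σ τ
    rw [lie_listProd]
    have step : ∀ u : Fin k,
        (List.ofFn (Function.update (F σ τ) u ⁅x, F σ τ u⁆)).prod
          = kd (a (σ u)) j •
              (List.ofFn fun w : Fin k =>
                tser n ℏ (s + (w.val : ℂ) * ℏ) ((Function.update a (σ u) i) (σ w)) (b (τ w))).prod
            - kd i (b (τ u)) •
              (List.ofFn fun w : Fin k =>
                tser n ℏ (s + (w.val : ℂ) * ℏ) (a (σ w)) ((Function.update b (τ u) j) (τ w))).prod := by
      intro u
      have hbr : ⁅x, F σ τ u⁆
          = kd (a (σ u)) j • tser n ℏ (s + (u.val : ℂ) * ℏ) i (b (τ u))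
            - kd i (b (τ u)) • tser n ℏ (s + (u.val : ℂ) * ℏ) (a (σ u)) j := by
        rw [hx, hF]
        rw [C_T1_bracket_tser, kd_comm j (a (σ u))]
      have hA : Function.update (F σ τ) u (tser n ℏ (s + (u.val : ℂ) * ℏ) i (b (τ u)))
          = fun w : Fin k =>
              tser n ℏ (s + (w.val : ℂ) * ℏ) ((Function.update a (σ u) i) (σ w)) (b (τ w)) := by
        funext w
        by_cases hw : w = u
        · subst hw; rw [Function.update_self, Function.update_self]
        · rw [Function.update_of_ne hw, hF,
            Function.update_of_ne (fun hc => hw (σ.injective hc))]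
      have hB : Function.update (F σ τ) u (tser n ℏ (s + (u.val : ℂ) * ℏ) (a (σ u)) j)
          = fun w : Fin k =>
              tser n ℏ (s + (w.val : ℂ) * ℏ) (a (σ w)) ((Function.update b (τ u) j) (τ w)) := by
        funext w
        by_cases hw : w = u
        · subst hw; rw [Function.update_self, Function.update_self]
        · rw [Function.update_of_ne hw, hF,
            Function.update_of_ne (fun hc => hw (τ.injective hc))]
      rw [hbr, listProd_update_sub, listProd_update_smul, listProd_update_smul, hA, hB]
    calc ∑ u : Fin k, (List.ofFn (Function.update (F σ τ) u ⁅x, F σ τ u⁆)).prod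
        = ∑ u : Fin k,
            (kd (a (σ u)) j •
              (List.ofFn fun w : Fin k =>
                tser n ℏ (s + (w.val : ℂ) * ℏ) ((Function.update a (σ u) i) (σ w)) (b (τ w))).prod
            - kd i (b (τ u)) •
              (List.ofFn fun w : Fin k =>
                tser n ℏ (s + (w.val : ℂ) * ℏ) (a (σ w)) ((Function.update b (τ u) j) (τ w))).prod) :=
          Finset.sum_congr rfl fun u _ => step u
      _ = _ := by
          rw [Finset.sum_sub_distrib]
          congr 1
          · exact Equiv.sum_comp σ (fun v => kd (a v) j •
              (List.ofFn fun w : Fin k =>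
                tser n ℏ (s + (w.val : ℂ) * ℏ) ((Function.update a v i) (σ w)) (b (τ w))).prod)
          · exact Equiv.sum_comp τ (fun v => kd i (b v) •
              (List.ofFn fun w : Fin k =>
                tser n ℏ (s + (w.val : ℂ) * ℏ) (a (σ w)) ((Function.update b v j) (τ w))).prod)
  -- now assemble
  simp only [qminor]
  rw [my_lie_sum]
  have lie_zsmul' : ∀ (z : ℤ) (y : PowerSeries (yGL n ℏ)), ⁅x, z • y⁆ = z • ⁅x, y⁆ := by
    intro z y
    rw [← Int.cast_smul_eq_zsmul ℂ z y, ← Int.cast_smul_eq_zsmul ℂ z ⁅x, y⁆]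
    simp only [Ring.lie_def, mul_smul_comm, smul_mul_assoc, smul_sub]
  calc ∑ σ : Equiv.Perm (Fin k), ⁅x, ∑ τ : Equiv.Perm (Fin k),
        ((Equiv.Perm.sign σ : ℤ) * (Equiv.Perm.sign τ : ℤ)) • (List.ofFn (F σ τ)).prod⁆
      = ∑ σ : Equiv.Perm (Fin k), ∑ τ : Equiv.Perm (Fin k),
          ((Equiv.Perm.sign σ : ℤ) * (Equiv.Perm.sign τ : ℤ)) •
            (∑ v : Fin k, kd (a v) j •
              (List.ofFn fun u : Fin k =>
                tser n ℏ (s + (u.val : ℂ) * ℏ) ((Function.update a v i) (σ u)) (b (τ u))).prod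
            - ∑ v : Fin k, kd i (b v) •
              (List.ofFn fun u : Fin k =>
                tser n ℏ (s + (u.val : ℂ) * ℏ) (a (σ u)) ((Function.update b v j) (τ u))).prod) := by
        refine Finset.sum_congr rfl fun σ _ => ?_
        rw [my_lie_sum]
        exact Finset.sum_congr rfl fun τ _ => by rw [lie_zsmul', key σ τ]
    _ = (∑ σ : Equiv.Perm (Fin k), ∑ τ : Equiv.Perm (Fin k), ∑ v : Fin k,
            ((Equiv.Perm.sign σ : ℤ) * (Equiv.Perm.sign τ : ℤ)) •
              (kd (a v) j •
                (List.ofFn fun u : Fin k =>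
                  tser n ℏ (s + (u.val : ℂ) * ℏ) ((Function.update a v i) (σ u)) (b (τ u))).prod))
          - ∑ σ : Equiv.Perm (Fin k), ∑ τ : Equiv.Perm (Fin k), ∑ v : Fin k,
            ((Equiv.Perm.sign σ : ℤ) * (Equiv.Perm.sign τ : ℤ)) •
              (kd i (b v) •
                (List.ofFn fun u : Fin k =>
                  tser n ℏ (s + (u.val : ℂ) * ℏ) (a (σ u)) ((Function.update b v j) (τ u))).prod) := by
        simp only [zsmul_sub, ← Finset.sum_zsmul, Finset.sum_sub_distrib]
    _ = _ := by
        have swap3 : ∀ (X : Equiv.Perm (Fin k) → Equiv.Perm (Fin k) → Fin k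
              → PowerSeries (yGL n ℏ)),
            (∑ σ : Equiv.Perm (Fin k), ∑ τ : Equiv.Perm (Fin k), ∑ v : Fin k, X σ τ v)
              = ∑ v : Fin k, ∑ σ : Equiv.Perm (Fin k), ∑ τ : Equiv.Perm (Fin k), X σ τ v := by
          intro X
          calc (∑ σ : Equiv.Perm (Fin k), ∑ τ : Equiv.Perm (Fin k), ∑ v : Fin k, X σ τ v)
              = ∑ σ : Equiv.Perm (Fin k), ∑ v : Fin k, ∑ τ : Equiv.Perm (Fin k), X σ τ v :=
                Finset.sum_congr rfl fun σ _ => Finset.sum_comm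
            _ = ∑ v : Fin k, ∑ σ : Equiv.Perm (Fin k), ∑ τ : Equiv.Perm (Fin k), X σ τ v :=
                Finset.sum_comm
        rw [swap3, swap3]
        congr 1
        · refine Finset.sum_congr rfl fun v _ => ?_
          rw [Finset.smul_sum]
          refine Finset.sum_congr rfl fun σ _ => ?_
          rw [Finset.smul_sum]
          exact Finset.sum_congr rfl fun τ _ => smul_comm _ _ _
        · refine Finset.sum_congr rfl fun v _ => ?_
          rw [Finset.smul_sum]
          refine Finset.sum_congr rfl fun σ _ => ?_
          rw [Finset.smul_sum]
          exact Finset.sum_congr rfl fun τ _ => smul_comm _ _ _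

end
end
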